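/- Let L be a language over a finite alphabet Σ recognized by a deterministic automaton A = (Q, q₀, Σ, δ, F) whose set F of final states is finite (Q may be infinite). Then the set L_∞ of infinite words with infinitely many prefixes in L is uncountable if and only if there exist an accessible state q and words u, v with δ(q, u) = q, δ(q, v) = q, uv ≠ vu, some prefix u' of u with δ(q, u') ∈ F and some prefix v' of v with δ(q, v') ∈ F (two distinct cycles based at q, each passing through a final state). -/

import Mathlib

/-- The prefix of length `ℓ` of an infinite word `w : ℕ → A`. -/
def prefixOf {A : Type*} (w : ℕ → A) (ℓ : ℕ) : List A := List.ofFn (fun i : Fin ℓ => w i)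

/-- `Linf L` : infinite words having infinitely many finite prefixes in `L`. -/
def Linf {A : Type*} (L : Set (List A)) : Set (ℕ → A) :=
  {w | {n : ℕ | prefixOf w n ∈ L}.Infinite}

/-- Transition function of a deterministic automaton extended to words. -/
def deltaStar {Q A : Type*} (δ : Q → A → Q) (q : Q) (w : List A) : Q := w.foldl δ q

/-!
Let `x` lead to `q` and let `u`, `v` be cycles at `q` through final states with `uv ≠ vu`. The
words `x c₀ c₁ c₂ ⋯` with every `cᵢ ∈ {uv, vu}` all lie in `L_∞`, and different choices give
different words because `uv` and `vu` are distinct words of the same length; so `L_∞` contains a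
copy of `{0,1}^ℕ`.

Conversely, if `w ∈ L_∞` then, `F` being finite, some final state `f` is reached by infinitely many
prefixes of `w`. Two adjacent factors of `w` cut at such positions are cycles at `f` through a
final state; if they always commute, `w` is eventually periodic, and there are only countably many
eventually periodic words.
-/

section

open Set

variable {Γ : Type*}

theorem deltaStar_append {Q : Type*} (δ : Q → Γ → Q) (q : Q) (u v : List Γ) :
    deltaStar δ q (u ++ v) = deltaStar δ (deltaStar δ q u) v :=
  List.foldl_append

theorem Set.Infinite.exists_infinite_fiber_of_mapsTo {α β : Type*} {s : Set α} {t : Set β}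
    {f : α → β} (hs : s.Infinite) (hf : MapsTo f s t) (ht : t.Finite) :
    ∃ b ∈ t, (s ∩ f ⁻¹' {b}).Infinite := by
  by_contra! h
  refine hs ((ht.biUnion h).subset fun a ha => ?_)
  exact mem_biUnion (hf ha) ⟨ha, rfl⟩

theorem List.getElem?_add_length_of_append_comm {α : Type*} {u v : List α}
    (h : u ++ v = v ++ u) {i : ℕ} (hi : i < v.length) :
    (u ++ v)[i + u.length]? = (u ++ v)[i]? := by
  rw [List.getElem?_append_right (by omega), Nat.add_sub_cancel, h, List.getElem?_append_left hi]

@[simp]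
theorem length_prefixOf (w : ℕ → Γ) (n : ℕ) : (prefixOf w n).length = n :=
  List.length_ofFn

theorem getElem?_prefixOf (w : ℕ → Γ) {n i : ℕ} (h : i < n) : (prefixOf w n)[i]? = some (w i) := by
  simp [prefixOf, h]

theorem take_prefixOf (w : ℕ → Γ) {m n : ℕ} (h : m ≤ n) :
    (prefixOf w n).take m = prefixOf w m := by
  apply List.ext_getElem?
  intro i
  by_cases hi : i < m
  · rw [List.getElem?_take_of_lt hi, getElem?_prefixOf w hi, getElem?_prefixOf w (by omega)]
  · rw [List.getElem?_eq_none (by simp; omega), List.getElem?_eq_none (by simp; omega)]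

theorem prefixOf_add (w : ℕ → Γ) (a b : ℕ) :
    prefixOf w (a + b) = prefixOf w a ++ prefixOf (fun i => w (a + i)) b := by
  simp only [prefixOf, List.ofFn_add]
  rfl

theorem prefixOf_length_of_prefix {w : ℕ → Γ} {p l : List Γ} (hl : prefixOf w l.length = l)
    (hp : p <+: l) : prefixOf w p.length = p := by
  rw [← take_prefixOf w hp.length_le, hl, ← List.prefix_iff_eq_take.mp hp]

theorem exists_prefixOf_eq_of_chain (b : ℕ → List Γ) (hb : ∀ k, b k <+: b (k + 1))
    (hlen : ∀ k, k ≤ (b k).length) : ∃ w : ℕ → Γ, ∀ k, prefixOf w (b k).length = b k := by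
  have hmono : ∀ {i j}, i ≤ j → b i <+: b j := fun {i j} hij => by
    induction j, hij using Nat.le_induction with
    | base => exact List.prefix_refl _
    | succ j _ ih => exact ih.trans (hb j)
  refine ⟨fun m => (b (m + 1))[m]'(by have := hlen (m + 1); omega), fun k => ?_⟩
  refine List.ext_getElem (by simp) fun i hi _ => ?_
  simp only [prefixOf, List.getElem_ofFn]
  rcases le_total (i + 1) k with h | h
  · exact (hmono h).getElem _
  · exact ((hmono h).getElem _).symm

theorem eq_of_prefixOf_eq_of_periodic {w w' : ℕ → Γ} {N p : ℕ} (hp : 0 < p)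
    (hw : ∀ m ≥ N, w (m + p) = w m) (hw' : ∀ m ≥ N, w' (m + p) = w' m)
    (h : prefixOf w (N + p) = prefixOf w' (N + p)) : w = w' := by
  funext m
  induction m using Nat.strong_induction_on with
  | _ m ih =>
    by_cases hm : m < N + p
    · simpa [getElem?_prefixOf _ hm] using congrArg (·[m]?) h
    · obtain ⟨k, rfl⟩ : ∃ k, m = k + p := ⟨m - p, by omega⟩
      rw [hw k (by omega), hw' k (by omega), ih k (by omega)]

theorem countable_setOf_eventually_periodic [Countable Γ] :
    {w : ℕ → Γ | ∃ N p, 0 < p ∧ ∀ m ≥ N, w (m + p) = w m}.Countable := by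
  have hunion : {w : ℕ → Γ | ∃ N p, 0 < p ∧ ∀ m ≥ N, w (m + p) = w m} =
      ⋃ N, ⋃ p, {w : ℕ → Γ | 0 < p ∧ ∀ m ≥ N, w (m + p) = w m} := by
    ext; simp
  rw [hunion]
  refine countable_iUnion fun N => countable_iUnion fun p => ?_
  refine (mapsTo_univ (prefixOf · (N + p)) _).countable_of_injOn ?_ countable_univ
  exact fun w hw w' hw' h => eq_of_prefixOf_eq_of_periodic hw.1 hw.2 hw'.2 h

def appendBlocks (x : List Γ) (c : ℕ → List Γ) (k : ℕ) : List Γ :=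
  x ++ ((List.range k).map c).flatten

@[simp]
theorem appendBlocks_zero (x : List Γ) (c : ℕ → List Γ) : appendBlocks x c 0 = x := by
  simp [appendBlocks]

theorem appendBlocks_succ (x : List Γ) (c : ℕ → List Γ) (k : ℕ) :
    appendBlocks x c (k + 1) = appendBlocks x c k ++ c k := by
  simp [appendBlocks, List.range_succ]

theorem length_appendBlocks (x : List Γ) {c : ℕ → List Γ} {ℓ : ℕ} (hc : ∀ i, (c i).length = ℓ)
    (k : ℕ) : (appendBlocks x c k).length = x.length + k * ℓ := by
  induction k with
  | zero => simp
  | succ k ih => rw [appendBlocks_succ, List.length_append, ih, hc]; ring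

theorem eq_of_forall_appendBlocks_eq {x : List Γ} {c c' : ℕ → List Γ}
    (h : ∀ k, appendBlocks x c k = appendBlocks x c' k) : c = c' := by
  funext k
  have := h (k + 1)
  rw [appendBlocks_succ, appendBlocks_succ, h k] at this
  exact List.append_cancel_left this

section Automaton

variable {Q : Type*} (δ : Q → Γ → Q)

theorem deltaStar_prefixOf_add {q0 q : Q} {w : ℕ → Γ} {a k : ℕ}
    (ha : deltaStar δ q0 (prefixOf w a) = q) (hak : deltaStar δ q0 (prefixOf w (a + k)) = q) :
    deltaStar δ q (prefixOf (fun i => w (a + i)) k) = q := by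
  rwa [prefixOf_add, deltaStar_append, ha] at hak

theorem Linf_countable_of_cycles_commute [Countable Γ] (q0 : Q) {F : Set Q} (hF : F.Finite)
    (hcomm : ∀ q, (∃ x, deltaStar δ q0 x = q) → q ∈ F → ∀ u v,
      deltaStar δ q u = q → deltaStar δ q v = q → u ++ v = v ++ u) :
    (Linf {x | deltaStar δ q0 x ∈ F}).Countable := by
  refine countable_setOf_eventually_periodic.mono fun w hw => ?_
  obtain ⟨f, hfF, hT⟩ := Infinite.exists_infinite_fiber_of_mapsTo (t := F)
    (f := fun n => deltaStar δ q0 (prefixOf w n)) hw (fun _ hn => hn) hF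
  replace hT : {n | deltaStar δ q0 (prefixOf w n) = f}.Infinite := hT.mono inter_subset_right
  obtain ⟨n₀, hn₀ : deltaStar δ q0 (prefixOf w n₀) = f⟩ := hT.nonempty
  obtain ⟨n₁, hn₁ : deltaStar δ q0 (prefixOf w n₁) = f, hlt⟩ := hT.exists_gt n₀
  obtain ⟨d, rfl⟩ := Nat.exists_eq_add_of_le hlt.le
  refine ⟨n₀, d, by omega, fun m hm => ?_⟩
  obtain ⟨n, hn : deltaStar δ q0 (prefixOf w n) = f, hmn⟩ := hT.exists_gt (m + d)
  obtain ⟨r, rfl⟩ := Nat.exists_eq_add_of_le (show n₀ + d ≤ n by omega)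
  -- the segments `[n₀, n₀ + d)` and `[n₀ + d, n)` are cycles at the final state `f`, so they
  -- commute, and then `w` has period `d` on `[n₀, n)`
  have huv := hcomm f ⟨_, hn₀⟩ hfF _ _
    (deltaStar_prefixOf_add δ hn₀ hn₁) (deltaStar_prefixOf_add δ hn₁ hn)
  have hseg : prefixOf (fun i => w (n₀ + i)) d ++ prefixOf (fun i => w (n₀ + d + i)) r =
      prefixOf (fun i => w (n₀ + i)) (d + r) := by
    rw [prefixOf_add]; simp only [add_assoc]
  have key := List.getElem?_add_length_of_append_comm huv (i := m - n₀) (by simp; omega)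
  rw [hseg, length_prefixOf, getElem?_prefixOf _ (by omega), getElem?_prefixOf _ (by omega)] at key
  simpa [show n₀ + (m - n₀ + d) = m + d by omega, show n₀ + (m - n₀) = m by omega] using key

theorem mem_Linf_of_forall_prefixOf_appendBlocks {q0 q : Q} {F : Set Q} {x : List Γ}
    (hx : deltaStar δ q0 x = q) {c : ℕ → List Γ} (hcyc : ∀ i, deltaStar δ q (c i) = q)
    (hfin : ∀ i, ∃ p, p <+: c i ∧ deltaStar δ q p ∈ F) (hlen : ∀ k, k ≤ (appendBlocks x c k).length)
    {w : ℕ → Γ} (hw : ∀ k, prefixOf w (appendBlocks x c k).length = appendBlocks x c k) :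
    w ∈ Linf {x | deltaStar δ q0 x ∈ F} := by
  choose p hp hpF using hfin
  have hq : ∀ k, deltaStar δ q0 (appendBlocks x c k) = q := by
    intro k
    induction k with
    | zero => rwa [appendBlocks_zero]
    | succ k ih => rw [appendBlocks_succ, deltaStar_append, ih, hcyc]
  have hprefix : ∀ k, appendBlocks x c k ++ p k <+: appendBlocks x c (k + 1) := fun k => by
    rw [appendBlocks_succ]; exact (List.prefix_append_right_inj _).mpr (hp k)
  have hmem : ∀ k, prefixOf w (appendBlocks x c k ++ p k).length ∈ {x | deltaStar δ q0 x ∈ F} := by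
    intro k
    rw [prefixOf_length_of_prefix (hw (k + 1)) (hprefix k)]
    show deltaStar δ q0 (_ ++ _) ∈ F
    rw [deltaStar_append, hq]
    exact hpF k
  refine infinite_of_forall_exists_gt fun a => ⟨_, hmem (a + 1), ?_⟩
  have := hlen (a + 1)
  simp only [List.length_append]
  omega

theorem not_countable_Linf_of_noncommuting_cycles {q0 q : Q} {F : Set Q} {x : List Γ}
    (hx : deltaStar δ q0 x = q) {u v : List Γ} (hu : deltaStar δ q u = q)
    (hv : deltaStar δ q v = q) (hne : u ++ v ≠ v ++ u)
    (hu' : ∃ u', u' <+: u ∧ deltaStar δ q u' ∈ F) (hv' : ∃ v', v' <+: v ∧ deltaStar δ q v' ∈ F) :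
    ¬ (Linf {x | deltaStar δ q0 x ∈ F}).Countable := by
  let c : Bool → List Γ := fun b => cond b (u ++ v) (v ++ u)
  have hc_inj : Function.Injective c := by
    intro b b' h
    cases b <;> cases b' <;> first | rfl | exact absurd h.symm hne | exact absurd h hne
  have hc_len : ∀ b, (c b).length = (u ++ v).length := by
    intro b; cases b <;> simp [c, Nat.add_comm]
  have hc_cyc : ∀ b, deltaStar δ q (c b) = q := by
    intro b; cases b <;> simp [c, deltaStar_append, hu, hv]
  have hc_fin : ∀ b, ∃ p, p <+: c b ∧ deltaStar δ q p ∈ F := by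
    obtain ⟨u', hu'u, hu'F⟩ := hu'
    obtain ⟨v', hv'v, hv'F⟩ := hv'
    intro b; cases b
    · exact ⟨v', hv'v.trans (List.prefix_append v u), hv'F⟩
    · exact ⟨u', hu'u.trans (List.prefix_append u v), hu'F⟩
  have hpos : 0 < (u ++ v).length := by
    rw [List.length_pos_iff]; rintro h; simp_all
  have hlen : ∀ (s : ℕ → Bool) k,
      (appendBlocks x (c ∘ s) k).length = x.length + k * (u ++ v).length :=
    fun s => length_appendBlocks x fun i => hc_len (s i)
  have hk : ∀ (s : ℕ → Bool) k, k ≤ (appendBlocks x (c ∘ s) k).length := fun s k => by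
    rw [hlen]; nlinarith
  choose W hW using fun s : ℕ → Bool => exists_prefixOf_eq_of_chain (appendBlocks x (c ∘ s))
    (fun k => by rw [appendBlocks_succ]; exact List.prefix_append _ _) (hk s)
  have hW_inj : Function.Injective W := by
    intro s s' h
    refine hc_inj.comp_left (eq_of_forall_appendBlocks_eq (x := x) fun k => ?_)
    rw [← hW s k, ← hW s' k, h, hlen, hlen]
  intro hcount
  have : Uncountable (ℕ → Bool) :=
    Cardinal.aleph0_lt_mk_iff.mp (by simp [Cardinal.aleph0_lt_continuum])
  refine not_countable_univ
    ((mapsTo_univ_iff.mpr fun s => ?_).countable_of_injOn hW_inj.injOn hcount)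
  exact mem_Linf_of_forall_prefixOf_appendBlocks δ hx (fun i => hc_cyc (s i))
    (fun i => hc_fin (s i)) (hk s) (hW s)

end Automaton

end

theorem stmt_8 {Γ : Type*} [Fintype Γ] (L : Set (List Γ))
    {Q : Type*} (q0 : Q) (δ : Q → Γ → Q) (F : Set Q) (hF : F.Finite)
    (hL : L = {w | deltaStar δ q0 w ∈ F}) :
    ¬ (Linf L).Countable ↔
      ∃ q : Q,
        (∃ x : List Γ, deltaStar δ q0 x = q) ∧
        ∃ u v : List Γ, deltaStar δ q u = q ∧ deltaStar δ q v = q ∧ u ++ v ≠ v ++ u ∧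
          (∃ u' : List Γ, u' <+: u ∧ deltaStar δ q u' ∈ F) ∧
          (∃ v' : List Γ, v' <+: v ∧ deltaStar δ q v' ∈ F) := by
  subst hL
  constructor
  · intro hunc
    by_contra hcycles
    refine hunc (Linf_countable_of_cycles_commute δ q0 hF fun q hq hqF u v hu hv => ?_)
    by_contra hne
    exact hcycles ⟨q, hq, u, v, hu, hv, hne, ⟨[], List.nil_prefix, hqF⟩, ⟨[], List.nil_prefix, hqF⟩⟩
  · rintro ⟨q, ⟨x, hx⟩, u, v, hu, hv, hne, hu', hv'⟩
    exact not_countable_Linf_of_noncommuting_cycles δ hx hu hv hne hu' hv'
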